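/- Let Ω ⊂ ℝ^(2n+1−k) be open and φ : Ω → ℝ^k continuously differentiable in the Euclidean sense. Then for every m ∈ Ω, φ is intrinsic differentiable at m and its intrinsic Jacobian is given entrywise by [J^φφ(m)]_{i,j} = (W_j^φ φ_i)(m) for i = 1,…,k and j = 1,…,2n−k, where W_j^φ φ_i denotes the vector field W_j^φ applied to the i-th component of φ. -/

import Mathlib

open scoped BigOperators
open MeasureTheory Filter Topology

noncomputable section

namespace HeisGraph

/-! ### Points of the Heisenberg group ℍⁿ, identified with ℝ^{2n+1} -/

/-- Index type for the coordinates of a point of ℍⁿ: `x`-coordinates, `y`-coordinates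
and the vertical coordinate `t`. -/
abbrev HIdxT (n : ℕ) := Sum (Fin n) (Sum (Fin n) Unit)

/-- ℍⁿ as a Euclidean space (so that the Euclidean norm is available). -/
abbrev HP (n : ℕ) := EuclideanSpace ℝ (HIdxT n)

variable {n k : ℕ}

def xPart (p : HP n) (i : Fin n) : ℝ := p (Sum.inl i)
def yPart (p : HP n) (i : Fin n) : ℝ := p (Sum.inr (Sum.inl i))
def tPart (p : HP n) : ℝ := p (Sum.inr (Sum.inr ()))

def mkH (x y : Fin n → ℝ) (t : ℝ) : HP n :=
  WithLp.toLp 2 fun i => Sum.elim x (Sum.elim y (fun _ => t)) i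

/-- The Heisenberg group product on ℝ^{2n+1}. -/
def hMul (p q : HP n) : HP n :=
  mkH (fun i => xPart p i + xPart q i) (fun i => yPart p i + yPart q i)
    (tPart p + tPart q + (1 / 2) * ∑ i : Fin n, (xPart p i * yPart q i - xPart q i * yPart p i))

/-- The Heisenberg group inverse: `p⁻¹ = -p`. -/
def hInv (p : HP n) : HP n := -p

/-- The intrinsic dilations of ℍⁿ. -/
def dilH (lam : ℝ) (p : HP n) : HP n :=
  mkH (fun i => lam * xPart p i) (fun i => lam * yPart p i) (lam ^ 2 * tPart p)

/-- The homogeneous norm `‖p‖_∞ = max { |(x,y)| , |t|^{1/2} }`. -/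
def normH (p : HP n) : ℝ :=
  max (Real.sqrt (∑ i, xPart p i ^ 2 + ∑ i, yPart p i ^ 2)) (Real.sqrt |tPart p|)

/-- The homogeneous distance `d_∞(p,q) = ‖q⁻¹ · p‖_∞`. -/
def dInf (p q : HP n) : ℝ := normH (hMul (hInv q) p)

/-! ### Points of 𝕄 ≅ ℝ^{2n+1-k}: coordinates (v_{k+1..n}, η_{1..k}, w_{k+1..n}, τ) -/

abbrev MIdxT (n k : ℕ) := Sum (Fin (n - k)) (Sum (Fin k) (Sum (Fin (n - k)) Unit))

abbrev MP (n k : ℕ) := EuclideanSpace ℝ (MIdxT n k)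

def vPart (a : MP n k) (j : Fin (n - k)) : ℝ := a (Sum.inl j)
def etaPart (a : MP n k) (i : Fin k) : ℝ := a (Sum.inr (Sum.inl i))
def wPart (a : MP n k) (j : Fin (n - k)) : ℝ := a (Sum.inr (Sum.inr (Sum.inl j)))
def tauPart (a : MP n k) : ℝ := a (Sum.inr (Sum.inr (Sum.inr ())))

def mkM (v : Fin (n - k) → ℝ) (η : Fin k → ℝ) (w : Fin (n - k) → ℝ) (τ : ℝ) : MP n k :=
  WithLp.toLp 2 fun i => Sum.elim v (Sum.elim η (Sum.elim w (fun _ => τ))) i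

/-- The embedding `i : ℝ^{2n+1-k} → ℍⁿ` onto the subgroup 𝕄 (`k` zeros among the
`x`-coordinates first). -/
def iota (a : MP n k) : HP n :=
  mkH (fun i => if h : (i : ℕ) < k then 0 else vPart a ⟨(i : ℕ) - k, by have := i.isLt; omega⟩)
    (fun i => if h : (i : ℕ) < k then etaPart a ⟨(i : ℕ), h⟩
      else wPart a ⟨(i : ℕ) - k, by have := i.isLt; omega⟩)
    (tauPart a)

/-- The embedding `j : ℝ^k → ℍⁿ` onto the horizontal subgroup ℍ. -/
def jmap (h : EuclideanSpace ℝ (Fin k)) : HP n :=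
  mkH (fun i => if hi : (i : ℕ) < k then h ⟨(i : ℕ), hi⟩ else 0) (fun _ => 0) 0

/-- The projection `π_𝕄 : ℍⁿ → 𝕄` determined by the unique factorization `p = m·h`,
`m ∈ 𝕄`, `h ∈ ℍ` (written in the coordinates of `MP n k`). -/
def piM (hk : k ≤ n) (p : HP n) : MP n k :=
  mkM (fun j => xPart p ⟨(j : ℕ) + k, by have := j.isLt; omega⟩)
    (fun i => yPart p ⟨(i : ℕ), lt_of_lt_of_le i.isLt hk⟩)
    (fun j => yPart p ⟨(j : ℕ) + k, by have := j.isLt; omega⟩)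
    (tPart p + (1 / 2) * ∑ i : Fin k,
      xPart p ⟨(i : ℕ), lt_of_lt_of_le i.isLt hk⟩ * yPart p ⟨(i : ℕ), lt_of_lt_of_le i.isLt hk⟩)

/-- The unit vertical vector of `MP n k`. -/
def tauUnit : MP n k := mkM 0 0 0 1

/-- The product `⋆` induced on ℝ^{2n+1-k} by the group structure of 𝕄. -/
def starMul (a b : MP n k) : MP n k :=
  a + b + ((1 / 2) * ∑ j : Fin (n - k), (vPart a j * wPart b j - vPart b j * wPart a j)) • tauUnit

/-- The dilations `δ_λ^⋆` induced on ℝ^{2n+1-k}. -/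
def dilStar (lam : ℝ) (a : MP n k) : MP n k :=
  mkM (fun j => lam * vPart a j) (fun i => lam * etaPart a i) (fun j => lam * wPart a j)
    (lam ^ 2 * tauPart a)

/-- The homogeneous norm of 𝕄 read on `MP n k` (it equals `normH (iota a)`). -/
def normM (a : MP n k) : ℝ :=
  max (Real.sqrt (∑ j, vPart a j ^ 2 + ∑ i, etaPart a i ^ 2 + ∑ j, wPart a j ^ 2))
    (Real.sqrt |tauPart a|)

/-- The graph map `Φ(a) = i(a) · j(φ(a))`. -/
def graphMap (φ : MP n k → EuclideanSpace ℝ (Fin k)) (a : MP n k) : HP n :=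
  hMul (iota a) (jmap (φ a))

/-- The graph distance `d_φ(a,b) = ‖π_𝕄(Φ(b)⁻¹ · Φ(a))‖_∞`. -/
def dPhi (hk : k ≤ n) (φ : MP n k → EuclideanSpace ℝ (Fin k)) (a b : MP n k) : ℝ :=
  normM (piM hk (hMul (hInv (graphMap φ b)) (graphMap φ a)))

/-- `L : ℝ^{2n+1-k} → ℝ^k` is ⋆-linear: a homomorphism for `⋆`, homogeneous of degree 1
for the dilations `δ_λ^⋆`. -/
def IsStarLinear (L : MP n k → EuclideanSpace ℝ (Fin k)) : Prop :=
  (∀ a b, L (starMul a b) = L a + L b) ∧ ∀ lam > (0 : ℝ), ∀ a, L (dilStar lam a) = lam • L a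

/-! ### Horizontal coordinates, matrices, cubes -/

/-- Index type for the `2n-k` horizontal coordinates of `MP n k` (τ deleted). -/
abbrev HorIdx (n k : ℕ) := Sum (Fin (n - k)) (Sum (Fin k) (Fin (n - k)))

/-- The projection `π` deleting the vertical coordinate τ. -/
def piHor (a : MP n k) : HorIdx n k → ℝ :=
  Sum.elim (fun j => vPart a j) (Sum.elim (fun i => etaPart a i) (fun j => wPart a j))

/-- The ⋆-linear map associated to a `k × (2n-k)` matrix: `L(a) = M · π(a)`. -/
def ofMatrix (M : Matrix (Fin k) (HorIdx n k) ℝ) (a : MP n k) : EuclideanSpace ℝ (Fin k) :=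
  WithLp.toLp 2 fun i => M.mulVec (piHor a) i

/-- The open coordinate cube `I_r(a)`. -/
def cube (r : ℝ) (a : MP n k) : Set (MP n k) := {p | ∀ i, |p i - a i| < r}

/-- The closed coordinate cube `cl(I_r(a))`. -/
def closedCube (r : ℝ) (a : MP n k) : Set (MP n k) := {p | ∀ i, |p i - a i| ≤ r}

/-! ### Intrinsic differentiability -/

/-- The quantitative condition expressing uniform intrinsic differentiability of `φ`
at `a₀` (relative to `Ω`) with intrinsic differential `L`:
`lim_{r→0} sup_{a,b ∈ I_r(a₀)∩Ω} |φ(b) - φ(a) - L(a⁻¹ ⋆ b)| / d_φ(b,a) = 0`. -/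
def UIDcond (hk : k ≤ n) (Ω : Set (MP n k)) (φ : MP n k → EuclideanSpace ℝ (Fin k))
    (a₀ : MP n k) (L : MP n k → EuclideanSpace ℝ (Fin k)) : Prop :=
  ∀ ε > (0 : ℝ), ∃ r > (0 : ℝ), ∀ a ∈ cube r a₀ ∩ Ω, ∀ b ∈ cube r a₀ ∩ Ω,
    ‖φ b - φ a - L (starMul (-a) b)‖ ≤ ε * dPhi hk φ b a

/-- `φ` is uniformly intrinsic differentiable at `a₀`. -/
def UIDAt (hk : k ≤ n) (Ω : Set (MP n k)) (φ : MP n k → EuclideanSpace ℝ (Fin k))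
    (a₀ : MP n k) : Prop :=
  ∃ L, IsStarLinear L ∧ UIDcond hk Ω φ a₀ L

/-- `φ` is uniformly intrinsic differentiable at `a₀` with intrinsic Jacobian matrix `M`. -/
def UIDAtWith (hk : k ≤ n) (Ω : Set (MP n k)) (φ : MP n k → EuclideanSpace ℝ (Fin k))
    (a₀ : MP n k) (M : Matrix (Fin k) (HorIdx n k) ℝ) : Prop :=
  UIDcond hk Ω φ a₀ (ofMatrix M)

/-- The condition expressing intrinsic differentiability of `φ` at `a₀` with intrinsic
differential `L`: `lim_{a→a₀} |φ(a) - φ(a₀) - L(a₀⁻¹ ⋆ a)| / d_φ(a,a₀) = 0`. -/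
def IDcond (hk : k ≤ n) (Ω : Set (MP n k)) (φ : MP n k → EuclideanSpace ℝ (Fin k))
    (a₀ : MP n k) (L : MP n k → EuclideanSpace ℝ (Fin k)) : Prop :=
  ∀ ε > (0 : ℝ), ∃ δ > (0 : ℝ), ∀ a ∈ Ω, ‖a - a₀‖ < δ →
    ‖φ a - φ a₀ - L (starMul (-a₀) a)‖ ≤ ε * dPhi hk φ a a₀

/-- `φ` is intrinsic differentiable at `a₀`. -/
def IDAt (hk : k ≤ n) (Ω : Set (MP n k)) (φ : MP n k → EuclideanSpace ℝ (Fin k))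
    (a₀ : MP n k) : Prop :=
  ∃ L, IsStarLinear L ∧ IDcond hk Ω φ a₀ L

/-- `φ` is intrinsic differentiable at `a₀` with intrinsic Jacobian matrix `M`. -/
def IDAtWith (hk : k ≤ n) (Ω : Set (MP n k)) (φ : MP n k → EuclideanSpace ℝ (Fin k))
    (a₀ : MP n k) (M : Matrix (Fin k) (HorIdx n k) ℝ) : Prop :=
  IDcond hk Ω φ a₀ (ofMatrix M)

/-! ### The vector fields `W_j^φ` -/

/-- The `2n-k` vector fields `W^φ` on `MP n k`:
`W_j^φ = ∂_{v_j} - (1/2) w_j ∂_τ`, `∇^{φ_i} = ∂_{η_i} + φ_i ∂_τ`,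
`W^φ = ∂_{w_j} + (1/2) v_j ∂_τ`. -/
def Wfield (φ : MP n k → EuclideanSpace ℝ (Fin k)) (ℓ : HorIdx n k) (p : MP n k) : MP n k :=
  match ℓ with
  | Sum.inl j => mkM (Pi.single j 1) 0 0 (-(1 / 2) * wPart p j)
  | Sum.inr (Sum.inl i) => mkM 0 (Pi.single i 1) 0 (φ p i)
  | Sum.inr (Sum.inr j) => mkM 0 0 (Pi.single j 1) ((1 / 2) * vPart p j)

/-- For `ψ` of class C¹ (Euclidean sense), the intrinsic Jacobian matrix
`J^ψψ(m) = [(W_ℓ^ψ ψ_i)(m)]_{i,ℓ}`. -/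
def JC1 (ψ : MP n k → EuclideanSpace ℝ (Fin k)) (m : MP n k) :
    Matrix (Fin k) (HorIdx n k) ℝ :=
  Matrix.of fun i ℓ => fderiv ℝ ψ m (Wfield ψ ℓ m) i

/-- `φ` has `∂^{φ_ℓ}`-derivative `D` at `a`: along every integral curve of `W_ℓ^φ`
through `a` the difference quotients of `φ` converge to `D`. -/
def HasWDerivAt (Ω : Set (MP n k)) (φ : MP n k → EuclideanSpace ℝ (Fin k)) (ℓ : HorIdx n k)
    (a : MP n k) (D : EuclideanSpace ℝ (Fin k)) : Prop :=
  ∀ δ > (0 : ℝ), ∀ γ : ℝ → MP n k, γ 0 = a →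
    (∀ s ∈ Set.Ioo (-δ) δ, γ s ∈ Ω) →
    (∀ s ∈ Set.Ioo (-δ) δ, HasDerivAt γ (Wfield φ ℓ (γ s)) s) →
    Tendsto (fun s : ℝ => s⁻¹ • (φ (γ s) - φ a)) (𝓝[≠] (0 : ℝ)) (𝓝 D)

/-- The little-½-Hölder condition on `Ω`. -/
def LittleHolder (Ω : Set (MP n k)) (φ : MP n k → EuclideanSpace ℝ (Fin k)) : Prop :=
  ∀ Ω' : Set (MP n k), IsOpen Ω' → IsCompact (closure Ω') → closure Ω' ⊆ Ω →
    ∀ ε > (0 : ℝ), ∃ r > (0 : ℝ), ∀ a ∈ Ω', ∀ b ∈ Ω', a ≠ b → ‖a - b‖ ≤ r →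
      ‖φ a - φ b‖ ≤ ε * Real.sqrt ‖a - b‖

/-! ### `C¹_ℍ` functions on ℍⁿ -/

/-- The horizontal vector fields `X_i`, `Y_i` of ℍⁿ. -/
def Zfield (i : Sum (Fin n) (Fin n)) (p : HP n) : HP n :=
  match i with
  | Sum.inl i => mkH (Pi.single i 1) 0 (-(1 / 2) * yPart p i)
  | Sum.inr i => mkH 0 (Pi.single i 1) ((1 / 2) * xPart p i)

/-- `f : U → ℝ^k` is of class `C¹_ℍ` with horizontal derivatives `Df`: `f` is continuous
on `U`, the `Df p i` are continuous on `U` and represent the distributional derivatives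
of `f` along the horizontal vector fields. -/
def C1H (U : Set (HP n)) (f : HP n → EuclideanSpace ℝ (Fin k))
    (Df : HP n → Sum (Fin n) (Fin n) → EuclideanSpace ℝ (Fin k)) : Prop :=
  ContinuousOn f U ∧ (∀ i, ContinuousOn (fun p => Df p i) U) ∧
    ∀ (i : Sum (Fin n) (Fin n)) (j : Fin k) (ψ : HP n → ℝ),
      ContDiff ℝ (⊤ : ℕ∞) ψ → HasCompactSupport ψ → tsupport ψ ⊆ U →
      (∫ p in U, f p j * fderiv ℝ ψ p (Zfield i p)) = -∫ p in U, Df p i j * ψ p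

/-! ### The quasi-distance ρ_φ -/

/-- The function `ρ_φ(a,b)`. -/
def rhoPhi (φ : MP n k → EuclideanSpace ℝ (Fin k)) (a b : MP n k) : ℝ :=
  max
    (Real.sqrt (∑ j, (vPart a j - vPart b j) ^ 2 + ∑ i, (etaPart a i - etaPart b i) ^ 2 +
      ∑ j, (wPart a j - wPart b j) ^ 2))
    (Real.sqrt |tauPart a - tauPart b +
      (1 / 2) * ∑ i, (φ a i + φ b i) * (etaPart b i - etaPart a i) +
      (1 / 2) * ∑ j, (vPart a j * wPart b j - vPart b j * wPart a j)|)

/-! ### Families of exponential maps -/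

/-- A family of exponential maps for `φ` near `a`, as in Definition 4.2 of the paper. -/
structure ExpFamily (Ω : Set (MP n k)) (φ : MP n k → EuclideanSpace ℝ (Fin k))
    (a : MP n k) where
  δ₁ : ℝ
  δ₂ : ℝ
  pos : 0 < δ₂
  lt : δ₂ < δ₁
  sub : closedCube δ₁ a ⊆ Ω
  E : HorIdx n k → ℝ → MP n k → MP n k
  ω : HorIdx n k → MP n k → EuclideanSpace ℝ (Fin k)
  maps : ∀ ℓ, ∀ s ∈ Set.Icc (-δ₂) δ₂, ∀ b ∈ closedCube δ₂ a, E ℓ s b ∈ closedCube δ₁ a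
  start : ∀ ℓ, ∀ b ∈ closedCube δ₂ a, E ℓ 0 b = b
  isIntegral : ∀ ℓ, ∀ b ∈ closedCube δ₂ a, ∀ s ∈ Set.Icc (-δ₂) δ₂,
    HasDerivAt (fun r => E ℓ r b) (Wfield φ ℓ (E ℓ s b)) s
  contOmega : ∀ ℓ (i : Fin k), ContinuousOn (fun b => ω ℓ b i) Ω
  chain : ∀ ℓ, ∀ b ∈ closedCube δ₂ a, ∀ s ∈ Set.Icc (-δ₂) δ₂, ∀ i : Fin k,
    φ (E ℓ s b) i - φ b i = ∫ r in (0 : ℝ)..s, ω ℓ (E ℓ r b) i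


/-! Write `T(a)` for the vertical coordinate of `π_𝕄(Φ(m)⁻¹·Φ(a))`, so that
`d_φ(a,m) = max(|π(a - m)|, |T(a)|^{1/2})`: hence `T(a) = O(d_φ(a,m)²)` and `d_φ(a,m) → 0`
as `a → m`. Since `a - m = ∑_ℓ π(a - m)_ℓ W_ℓ^φ(m) + T(a) ∂_τ`, also `a - m = O(d_φ(a,m))`,
and `J(m) π(a - m) = dφ(m)(a - m) - T(a) dφ(m)∂_τ`. So the intrinsic remainder is the
Euclidean one, `o(|a - m|)`, plus `O(T(a))`, and both are `o(d_φ(a,m))`. -/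

section Coordinates

@[simp] lemma xPart_mkH (x y : Fin n → ℝ) (t : ℝ) (i : Fin n) : xPart (mkH x y t) i = x i := rfl
@[simp] lemma yPart_mkH (x y : Fin n → ℝ) (t : ℝ) (i : Fin n) : yPart (mkH x y t) i = y i := rfl
@[simp] lemma tPart_mkH (x y : Fin n → ℝ) (t : ℝ) : tPart (mkH x y t) = t := rfl

@[simp] lemma vPart_mkM (v : Fin (n - k) → ℝ) (η : Fin k → ℝ) (w : Fin (n - k) → ℝ) (τ : ℝ) (j) :
    vPart (mkM v η w τ) j = v j := rfl
@[simp] lemma etaPart_mkM (v : Fin (n - k) → ℝ) (η : Fin k → ℝ) (w : Fin (n - k) → ℝ) (τ : ℝ) (i) :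
    etaPart (mkM v η w τ) i = η i := rfl
@[simp] lemma wPart_mkM (v : Fin (n - k) → ℝ) (η : Fin k → ℝ) (w : Fin (n - k) → ℝ) (τ : ℝ) (j) :
    wPart (mkM v η w τ) j = w j := rfl
@[simp] lemma tauPart_mkM (v : Fin (n - k) → ℝ) (η : Fin k → ℝ) (w : Fin (n - k) → ℝ) (τ : ℝ) :
    tauPart (mkM v η w τ) = τ := rfl

@[simp] lemma xPart_neg (p : HP n) (i : Fin n) : xPart (-p) i = -xPart p i := rfl
@[simp] lemma yPart_neg (p : HP n) (i : Fin n) : yPart (-p) i = -yPart p i := rfl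
@[simp] lemma tPart_neg (p : HP n) : tPart (-p) = -tPart p := rfl

@[simp] lemma vPart_sub (a b : MP n k) (j : Fin (n - k)) :
    vPart (a - b) j = vPart a j - vPart b j := rfl
@[simp] lemma etaPart_sub (a b : MP n k) (i : Fin k) :
    etaPart (a - b) i = etaPart a i - etaPart b i := rfl
@[simp] lemma wPart_sub (a b : MP n k) (j : Fin (n - k)) :
    wPart (a - b) j = wPart a j - wPart b j := rfl

lemma sum_fin_eq_sum_lt_add_sum_ge (hk : k ≤ n) (f : Fin n → ℝ) :
    ∑ i : Fin n, f i =
      ∑ i : Fin k, f ⟨i, i.isLt.trans_le hk⟩ +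
        ∑ j : Fin (n - k), f ⟨j + k, by omega⟩ := by
  rw [← Equiv.sum_comp (finSumFinEquiv.trans (finCongr (Nat.add_sub_cancel' hk))) f,
    Fintype.sum_sum_type]
  congr 1
  exact Finset.sum_congr rfl fun i _ => congr_arg f (Fin.ext (by simp [add_comm]))

end Coordinates

section GraphMap

variable (φ : MP n k → EuclideanSpace ℝ (Fin k)) (c : MP n k)

lemma xPart_graphMap_of_lt (i : Fin k) (hi : (i : ℕ) < n) :
    xPart (graphMap φ c) ⟨i, hi⟩ = φ c i := by
  simp [graphMap, hMul, iota, jmap]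

lemma yPart_graphMap_of_lt (i : Fin k) (hi : (i : ℕ) < n) :
    yPart (graphMap φ c) ⟨i, hi⟩ = etaPart c i := by
  simp [graphMap, hMul, iota, jmap]

lemma xPart_graphMap_add (j : Fin (n - k)) (hj : (j : ℕ) + k < n) :
    xPart (graphMap φ c) ⟨j + k, hj⟩ = vPart c j := by
  simp [graphMap, hMul, iota, jmap]

lemma yPart_graphMap_add (j : Fin (n - k)) (hj : (j : ℕ) + k < n) :
    yPart (graphMap φ c) ⟨j + k, hj⟩ = wPart c j := by
  simp [graphMap, hMul, iota, jmap]

lemma tPart_graphMap (hk : k ≤ n) :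
    tPart (graphMap φ c) = tauPart c - (1 / 2) * ∑ i : Fin k, φ c i * etaPart c i := by
  rw [graphMap, hMul, tPart_mkH, sum_fin_eq_sum_lt_add_sum_ge hk]
  simp [iota, jmap]
  ring

end GraphMap

section GraphQuotient

/-- The vertical coordinate of `π_𝕄(Φ(b)⁻¹·Φ(a))`. -/
def quotTau (φ : MP n k → EuclideanSpace ℝ (Fin k)) (a b : MP n k) : ℝ :=
  tauPart a - tauPart b - ∑ i, φ b i * (etaPart a i - etaPart b i)
    + (1 / 2) * ∑ j, (vPart a j * wPart b j - vPart b j * wPart a j)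

def horPart (x : MP n k) : EuclideanSpace ℝ (HorIdx n k) := WithLp.toLp 2 (piHor x)

variable (hk : k ≤ n) (φ : MP n k → EuclideanSpace ℝ (Fin k)) (a b : MP n k)

lemma horPart_piM_graphMap :
    horPart (piM hk (hMul (hInv (graphMap φ b)) (graphMap φ a))) = horPart (a - b) := by
  ext ℓ
  rcases ℓ with j | i | j <;>
    simp [horPart, piHor, piM, hMul, hInv, xPart_graphMap_add, yPart_graphMap_of_lt,
      yPart_graphMap_add, neg_add_eq_sub]

lemma tauPart_piM_graphMap :
    tauPart (piM hk (hMul (hInv (graphMap φ b)) (graphMap φ a))) = quotTau φ a b := by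
  simp only [piM, tauPart_mkM, hMul, tPart_mkH, xPart_mkH, yPart_mkH]
  rw [sum_fin_eq_sum_lt_add_sum_ge hk]
  simp only [hInv, xPart_neg, yPart_neg, tPart_neg, xPart_graphMap_of_lt, yPart_graphMap_of_lt,
    xPart_graphMap_add, yPart_graphMap_add, tPart_graphMap φ _ hk, quotTau, mul_sub,
    add_mul, mul_add, neg_mul, mul_neg, Finset.sum_add_distrib, Finset.sum_sub_distrib,
    Finset.sum_neg_distrib]
  ring

end GraphQuotient

section GraphDistance

lemma normM_eq_max (x : MP n k) : normM x = max ‖horPart x‖ (Real.sqrt |tauPart x|) := by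
  simp [normM, horPart, EuclideanSpace.norm_eq, piHor, Fintype.sum_sum_type, add_assoc]

lemma norm_horPart_le (x : MP n k) : ‖horPart x‖ ≤ ‖x‖ := by
  simp only [horPart, EuclideanSpace.norm_eq, piHor, Fintype.sum_sum_type, Sum.elim_inl,
    Sum.elim_inr, Real.norm_eq_abs, sq_abs]
  refine Real.sqrt_le_sqrt ?_
  simp only [vPart, etaPart, wPart, Finset.univ_unique, Finset.sum_singleton]
  nlinarith [sq_nonneg (x (Sum.inr (Sum.inr (Sum.inr ()))))]

variable (hk : k ≤ n) (φ : MP n k → EuclideanSpace ℝ (Fin k)) (a b : MP n k)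

lemma dPhi_eq_max : dPhi hk φ a b = max ‖horPart (a - b)‖ (Real.sqrt |quotTau φ a b|) := by
  rw [dPhi, normM_eq_max, horPart_piM_graphMap, tauPart_piM_graphMap]

lemma dPhi_nonneg : 0 ≤ dPhi hk φ a b :=
  (dPhi_eq_max hk φ a b).symm ▸ (norm_nonneg _).trans (le_max_left _ _)

lemma norm_horPart_le_dPhi : ‖horPart (a - b)‖ ≤ dPhi hk φ a b :=
  (dPhi_eq_max hk φ a b).symm ▸ le_max_left _ _

lemma abs_quotTau_le_dPhi_sq : |quotTau φ a b| ≤ dPhi hk φ a b ^ 2 := by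
  rw [← Real.sq_sqrt (abs_nonneg (quotTau φ a b))]
  exact pow_le_pow_left₀ (Real.sqrt_nonneg _)
    ((dPhi_eq_max hk φ a b).symm ▸ le_max_right _ _) 2

lemma continuous_quotTau_left : Continuous fun a => quotTau φ a b := by
  unfold quotTau tauPart etaPart vPart wPart
  fun_prop

lemma tendsto_dPhi_self : Tendsto (fun a => dPhi hk φ a b) (𝓝 b) (𝓝 0) := by
  simp_rw [dPhi_eq_max]
  rw [← max_self 0]
  refine Tendsto.max ?_ ?_
  · exact squeeze_zero (fun _ => norm_nonneg _) (fun a => norm_horPart_le (a - b))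
      (tendsto_norm_sub_self b)
  · have h := ((continuous_quotTau_left φ b).abs.sqrt).tendsto b
    simpa [quotTau] using h

end GraphDistance

section VectorFields

variable (φ : MP n k → EuclideanSpace ℝ (Fin k)) (m a : MP n k)

lemma sub_eq_sum_Wfield_add :
    a - m = ∑ ℓ, piHor (a - m) ℓ • Wfield φ ℓ m + quotTau φ a m • tauUnit := by
  ext idx
  rw [PiLp.add_apply, WithLp.ofLp_sum, Finset.sum_apply]
  simp only [Fintype.sum_sum_type]
  rcases idx with j | i | j | u
  all_goals simp [Wfield, piHor, vPart, etaPart, wPart, tauPart, quotTau, mkM, tauUnit,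
    Pi.single_apply, Finset.mul_sum, Finset.sum_sub_distrib, mul_sub, sub_mul]
  simp only [mul_comm, mul_left_comm, mul_assoc]
  ring

lemma piHor_starMul_neg : piHor (starMul (-m) a) = piHor (a - m) := by
  ext ℓ
  rcases ℓ with j | i | j <;>
    simp [piHor, starMul, tauUnit, vPart, etaPart, wPart, mkM, sub_eq_neg_add]

lemma ofMatrix_starMul_neg (L : MP n k →L[ℝ] EuclideanSpace ℝ (Fin k)) :
    ofMatrix (Matrix.of fun i ℓ => L (Wfield φ ℓ m) i) (starMul (-m) a)
      = L (a - m) - quotTau φ a m • L tauUnit := by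
  conv_rhs => rw [sub_eq_sum_Wfield_add φ m a]
  rw [map_add, map_sum, map_smul, add_sub_cancel_right]
  ext i
  simp [ofMatrix, Matrix.mulVec, dotProduct, piHor_starMul_neg, mul_comm]

end VectorFields

section Asymptotics

open Asymptotics

lemma isBigO_smul_const {α E : Type*} [NormedAddCommGroup E] [NormedSpace ℝ E] {l : Filter α}
    (f : α → ℝ) (v : E) : (fun x => f x • v) =O[l] f :=
  isBigO_of_le' l fun x => (norm_smul (f x) v).trans_le (mul_comm _ _).le

variable (hk : k ≤ n) (φ : MP n k → EuclideanSpace ℝ (Fin k)) (m : MP n k)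

lemma quotTau_isLittleO_dPhi :
    (fun a => quotTau φ a m) =o[𝓝 m] fun a => dPhi hk φ a m := by
  have hsq : (fun a => quotTau φ a m) =O[𝓝 m] fun a => dPhi hk φ a m ^ 2 :=
    isBigO_of_le _ fun a => by
      simpa [abs_of_nonneg (dPhi_nonneg hk φ a m)] using abs_quotTau_le_dPhi_sq hk φ a m
  exact hsq.trans_isLittleO
    ((isLittleO_pow_id one_lt_two).comp_tendsto (tendsto_dPhi_self hk φ m))

lemma sub_isBigO_dPhi : (fun a => a - m) =O[𝓝 m] fun a => dPhi hk φ a m := by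
  have hdecomp : (fun a => a - m) = fun a =>
      ∑ ℓ, piHor (a - m) ℓ • Wfield φ ℓ m + quotTau φ a m • tauUnit :=
    funext (sub_eq_sum_Wfield_add φ m)
  rw [hdecomp]
  refine (IsBigO.fun_sum fun ℓ _ => ?_).add
    ((isBigO_smul_const _ _).trans (quotTau_isLittleO_dPhi hk φ m).isBigO)
  refine (isBigO_smul_const _ _).trans (isBigO_of_le _ fun a => ?_)
  rw [Real.norm_of_nonneg (dPhi_nonneg hk φ a m)]
  exact (PiLp.norm_apply_le (horPart (a - m)) ℓ).trans (norm_horPart_le_dPhi hk φ a m)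

lemma IDcond_of_isLittleO (Ω : Set (MP n k)) (L : MP n k → EuclideanSpace ℝ (Fin k))
    (h : (fun a => φ a - φ m - L (starMul (-m) a)) =o[𝓝 m] fun a => dPhi hk φ a m) :
    IDcond hk Ω φ m L := by
  intro ε hε
  obtain ⟨δ, hδ, hball⟩ := Metric.eventually_nhds_iff.mp (h.bound hε)
  refine ⟨δ, hδ, fun a _ ha => ?_⟩
  have hbound := hball (by rwa [dist_eq_norm])
  rwa [Real.norm_of_nonneg (dPhi_nonneg hk φ a m)] at hbound

end Asymptotics

theorem statement5_general (n k : ℕ) (hk : k ≤ n)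
    (Ω : Set (MP n k)) (hΩ : IsOpen Ω)
    (φ : MP n k → EuclideanSpace ℝ (Fin k)) (hφ : ContDiffOn ℝ 1 φ Ω) :
    ∀ m ∈ Ω, IDAtWith hk Ω φ m (JC1 φ m) := by
  intro m hm
  have hD : HasFDerivAt φ (fderiv ℝ φ m) m :=
    ((hφ.contDiffAt (hΩ.mem_nhds hm)).differentiableAt one_ne_zero).hasFDerivAt
  have hremainder : ∀ a, φ a - φ m - ofMatrix (JC1 φ m) (starMul (-m) a)
      = (φ a - φ m - fderiv ℝ φ m (a - m)) + quotTau φ a m • fderiv ℝ φ m tauUnit := fun a => by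
    rw [JC1, ofMatrix_starMul_neg]
    abel
  refine IDcond_of_isLittleO hk φ m Ω _ ?_
  simp_rw [hremainder]
  exact (hD.isLittleO.trans_isBigO (sub_isBigO_dPhi hk φ m)).add
    ((isBigO_smul_const _ _).trans_isLittleO (quotTau_isLittleO_dPhi hk φ m))

/-- Proposition 3.9: if `φ` is continuously differentiable in the
Euclidean sense on the open set `Ω`, then `φ` is intrinsic differentiable at every
`m ∈ Ω`, with intrinsic Jacobian `[J^φφ(m)]_{i,ℓ} = (W_ℓ^φ φ_i)(m)`. -/
theorem statement5 (n k : ℕ) (hn : 1 ≤ n) (hk1 : 1 ≤ k) (hk : k ≤ n)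
    (Ω : Set (MP n k)) (hΩ : IsOpen Ω)
    (φ : MP n k → EuclideanSpace ℝ (Fin k)) (hφ : ContDiffOn ℝ 1 φ Ω) :
    ∀ m ∈ Ω, IDAtWith hk Ω φ m (JC1 φ m) :=
  statement5_general n k hk Ω hΩ φ hφ

end HeisGraph
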